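/- Let B be an invertible real 2×2 matrix, J := det B, a ∈ ℝ², and F(x) := Bx + a. Let v̂ : ℝ² → ℝ² be differentiable and let v : ℝ² → ℝ² be its re-scaled covariant Piola transform, v(F(x)) = J·B⁻ᵀ v̂(x). Then v is differentiable and its symmetric gradient transforms as ε(v)(F(x)) = J·B⁻ᵀ ε(v̂)(x) B⁻¹ for all x ∈ ℝ². -/

import Mathlib

open Matrix

noncomputable section

/-! Inverting `F`, the transform reads `v = M ∘ v̂ ∘ F⁻¹` with `M = J B⁻ᵀ`, so the chain rule gives
`Dv(F x) = J B⁻ᵀ Dv̂(x) B⁻¹`. This is a congruence by `B⁻¹` (up to the scalar `J`), and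
congruences commute with transposition, hence pass to the symmetric part. -/

/-- Jacobian matrix of a vector field `w : ℝ² → ℝ²`. -/
def jac (w : (Fin 2 → ℝ) → Fin 2 → ℝ) (y : Fin 2 → ℝ) : Matrix (Fin 2) (Fin 2) ℝ :=
  Matrix.of fun k j => fderiv ℝ (fun z => w z k) y (Pi.single j 1)

/-- Symmetric gradient (strain) `ε(w) = (Dw + Dwᵀ)/2` of a vector field. -/
def symGrad (w : (Fin 2 → ℝ) → Fin 2 → ℝ) (y : Fin 2 → ℝ) : Matrix (Fin 2) (Fin 2) ℝ :=
  (1 / 2 : ℝ) • (jac w y + (jac w y)ᵀ)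

theorem hasFDerivAt_mulVec_comp_affine {l m n p : Type*} [Fintype l] [Fintype m] [Fintype n]
    [Fintype p] [DecidableEq m] [DecidableEq p]
    (M : Matrix l m ℝ) (C : Matrix n p ℝ) (a : p → ℝ) {w : (n → ℝ) → m → ℝ}
    {L : (n → ℝ) →L[ℝ] m → ℝ} {z : p → ℝ} (hw : HasFDerivAt w L (C *ᵥ (z - a))) :
    HasFDerivAt (fun z => M *ᵥ w (C *ᵥ (z - a)))
      ((toLin' M).toContinuousLinearMap.comp (L.comp (toLin' C).toContinuousLinearMap)) z := by
  have hC : HasFDerivAt (fun z => C *ᵥ (z - a)) (toLin' C).toContinuousLinearMap z := by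
    simpa using (toLin' C).toContinuousLinearMap.hasFDerivAt.comp z
      ((hasFDerivAt_id z).sub_const a)
  exact (toLin' M).toContinuousLinearMap.hasFDerivAt.comp z (hw.comp z hC)

theorem jac_eq_toMatrix' {w : (Fin 2 → ℝ) → Fin 2 → ℝ} {y : Fin 2 → ℝ}
    (hw : DifferentiableAt ℝ w y) :
    jac w y = LinearMap.toMatrix' (fderiv ℝ w y : (Fin 2 → ℝ) →ₗ[ℝ] Fin 2 → ℝ) := by
  ext k j
  have hk := (hasFDerivAt_pi'.mp hw.hasFDerivAt k).fderiv
  simp [jac, hk]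

theorem jac_mulVec_comp_affine (M C : Matrix (Fin 2) (Fin 2) ℝ) (a : Fin 2 → ℝ)
    {w : (Fin 2 → ℝ) → Fin 2 → ℝ} {z : Fin 2 → ℝ}
    (hw : DifferentiableAt ℝ w (C *ᵥ (z - a))) :
    jac (fun z => M *ᵥ w (C *ᵥ (z - a))) z = M * jac w (C *ᵥ (z - a)) * C := by
  have hD := hasFDerivAt_mulVec_comp_affine M C a hw.hasFDerivAt
  rw [jac_eq_toMatrix' hD.differentiableAt, jac_eq_toMatrix' hw, hD.fderiv]
  simp only [ContinuousLinearMap.toLinearMap_comp, LinearMap.toMatrix'_comp,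
    LinearMap.coe_toContinuousLinearMap, LinearMap.toMatrix'_toLin', Matrix.mul_assoc]

theorem symGrad_eq_smul_conj_of_jac_eq {v w : (Fin 2 → ℝ) → Fin 2 → ℝ} {z y : Fin 2 → ℝ}
    {c : ℝ} {A : Matrix (Fin 2) (Fin 2) ℝ} (h : jac v z = c • (Aᵀ * jac w y * A)) :
    symGrad v z = c • (Aᵀ * symGrad w y * A) := by
  simp only [symGrad, h, transpose_smul, transpose_mul, transpose_transpose, Matrix.mul_assoc,
    Matrix.mul_add, Matrix.add_mul, Matrix.mul_smul, Matrix.smul_mul, smul_add, smul_smul]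
  module

/-- Transformation of the symmetric gradient under the re-scaled covariant Piola
transform `v(Bx + a) = det B · B⁻ᵀ v̂(x)`:
`ε(v)(Bx + a) = det B · B⁻ᵀ ε(v̂)(x) B⁻¹`. -/
theorem piola_strain_transform
    (B : Matrix (Fin 2) (Fin 2) ℝ) (hB : IsUnit B.det) (a : Fin 2 → ℝ)
    (vhat v : (Fin 2 → ℝ) → Fin 2 → ℝ)
    (hdiff : Differentiable ℝ vhat)
    (hv : ∀ y, v (B.mulVec y + a) = B.det • (B⁻¹)ᵀ.mulVec (vhat y)) :
    Differentiable ℝ v ∧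
    ∀ y, symGrad v (B.mulVec y + a) = B.det • ((B⁻¹)ᵀ * symGrad vhat y * B⁻¹) := by
  have hF_inv : ∀ y, B⁻¹ *ᵥ (B *ᵥ y + a - a) = y := fun y => by
    rw [add_sub_cancel_right, mulVec_mulVec, nonsing_inv_mul B hB, one_mulVec]
  have hv_comp : v = fun z => (B.det • (B⁻¹)ᵀ) *ᵥ vhat (B⁻¹ *ᵥ (z - a)) := funext fun z => by
    have hz : B *ᵥ (B⁻¹ *ᵥ (z - a)) + a = z := by
      rw [mulVec_mulVec, mul_nonsing_inv B hB, one_mulVec, sub_add_cancel]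
    conv_lhs => rw [← hz]
    rw [hv, smul_mulVec]
  refine ⟨fun z => ?_, fun y => ?_⟩
  · rw [hv_comp]
    exact (hasFDerivAt_mulVec_comp_affine _ _ a (hdiff _).hasFDerivAt).differentiableAt
  · refine symGrad_eq_smul_conj_of_jac_eq ?_
    rw [hv_comp, jac_mulVec_comp_affine _ _ a (hdiff _), hF_inv, smul_mul, smul_mul]
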